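/- arXiv:2301.08181 — 2 statements merged into one kernel-verified Lean document; each statement's English description precedes it below -/
import Mathlib

section
/- Let A be an irreducible nonnegative n×n matrix with largest eigenvalue 1 and positive left-and-right eigenvector w normalized to unit length. Then (1 − σ₂(A))/2 ≤ φ(A), where σ₂(A) is the second largest singular value of A. -/
/-!
With `u = 1_S w` and `a = ∑_{i ∈ S} w i ^ 2`, the vector `v = u - a w` is orthogonal to `w`,
and the eigenvector equations give `v ⬝ v = a (1 - a)` and `v ⬝ A v = u ⬝ A u - a ²`, while the
cut weight of `S` is `u ⬝ A (w - u) = a - u ⬝ A u`. By Cauchy–Schwarz and the definition of `σ₂`,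
`v ⬝ A v ≤ σ₂ (v ⬝ v)`, so the cut weight is at least `(1 - σ₂) a (1 - a) ≥ (1 - σ₂) a / 2`.
-/

open Matrix Finset

/-- The second largest singular value of a matrix `A` whose top (unit) singular vector is `w`:
the maximum of `‖A x‖` over unit vectors `x` orthogonal to `w`. -/
noncomputable def sigma2 {n : ℕ} (A : Matrix (Fin n) (Fin n) ℝ) (w : Fin n → ℝ) : ℝ :=
  sSup {r : ℝ | ∃ x : Fin n → ℝ, x ⬝ᵥ w = 0 ∧ x ⬝ᵥ x = 1 ∧
    r = Real.sqrt (A.mulVec x ⬝ᵥ A.mulVec x)}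

section DotProduct

variable {ι : Type*} [Fintype ι]

lemma dotProduct_self_nonneg {R : Type*} [Ring R] [LinearOrder R] [IsStrictOrderedRing R]
    (v : ι → R) : 0 ≤ v ⬝ᵥ v :=
  sum_nonneg fun i _ => mul_self_nonneg (v i)

lemma dotProduct_le_sqrt_mul_sqrt (x y : ι → ℝ) : x ⬝ᵥ y ≤ √(x ⬝ᵥ x) * √(y ⬝ᵥ y) := by
  simpa only [dotProduct, sq] using Real.sum_mul_le_sqrt_mul_sqrt univ x y

lemma dotProduct_mulVec_self_le_sum_sq (A : Matrix ι ι ℝ) {x : ι → ℝ} (hx : x ⬝ᵥ x = 1) :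
    A *ᵥ x ⬝ᵥ A *ᵥ x ≤ ∑ i, ∑ j, A i j ^ 2 := by
  refine sum_le_sum fun i _ => ?_
  have hx' : ∑ j, x j ^ 2 = 1 := by simpa only [dotProduct, sq] using hx
  simpa only [mulVec, dotProduct, ← sq, hx', mul_one] using sum_mul_sq_le_sq_mul_sq univ (A i) x

lemma indicator_dotProduct_mulVec_indicator (A : Matrix ι ι ℝ) (s t : Finset ι) (x y : ι → ℝ) :
    (s : Set ι).indicator x ⬝ᵥ A *ᵥ (t : Set ι).indicator y =
      ∑ i ∈ s, ∑ j ∈ t, x i * A i j * y j := by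
  classical
  simp [dotProduct, mulVec, Set.indicator_apply, mul_sum, mul_assoc]

end DotProduct

section Sigma2

variable {n : ℕ} (A : Matrix (Fin n) (Fin n) ℝ) {w : Fin n → ℝ}

lemma sqrt_dotProduct_mulVec_le_sigma2 {x : Fin n → ℝ} (hxw : x ⬝ᵥ w = 0) (hx : x ⬝ᵥ x = 1) :
    √(A *ᵥ x ⬝ᵥ A *ᵥ x) ≤ sigma2 A w :=
  le_csSup ⟨√(∑ i, ∑ j, A i j ^ 2), by
    rintro r ⟨y, -, hy, rfl⟩
    exact Real.sqrt_le_sqrt (dotProduct_mulVec_self_le_sum_sq A hy)⟩ ⟨x, hxw, hx, rfl⟩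

lemma sqrt_dotProduct_mulVec_le_sigma2_mul {v : Fin n → ℝ} (hvw : v ⬝ᵥ w = 0) :
    √(A *ᵥ v ⬝ᵥ A *ᵥ v) ≤ sigma2 A w * √(v ⬝ᵥ v) := by
  rcases eq_or_ne v 0 with rfl | hv
  · simp
  have hc : 0 < √(v ⬝ᵥ v) := Real.sqrt_pos.mpr (by simpa using dotProduct_self_star_pos_iff.mpr hv)
  set x := (√(v ⬝ᵥ v))⁻¹ • v
  have hxw : x ⬝ᵥ w = 0 := by rw [smul_dotProduct, hvw, smul_zero]
  have hx : x ⬝ᵥ x = 1 := by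
    rw [smul_dotProduct, dotProduct_smul, smul_eq_mul, smul_eq_mul, ← mul_assoc, ← sq, inv_pow,
      Real.sq_sqrt (dotProduct_self_nonneg v), inv_mul_cancel₀]
    exact (Real.sqrt_pos.mp hc).ne'
  have hAx : √(A *ᵥ x ⬝ᵥ A *ᵥ x) = (√(v ⬝ᵥ v))⁻¹ * √(A *ᵥ v ⬝ᵥ A *ᵥ v) := by
    rw [mulVec_smul, smul_dotProduct, dotProduct_smul, smul_eq_mul, smul_eq_mul, ← mul_assoc,
      ← sq, Real.sqrt_mul (sq_nonneg _), Real.sqrt_sq (inv_nonneg.mpr hc.le)]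
  have hσ := sqrt_dotProduct_mulVec_le_sigma2 A hxw hx
  rw [hAx, inv_mul_le_iff₀ hc] at hσ
  linarith

lemma dotProduct_mulVec_le_sigma2_mul {v : Fin n → ℝ} (hvw : v ⬝ᵥ w = 0) :
    v ⬝ᵥ A *ᵥ v ≤ sigma2 A w * (v ⬝ᵥ v) :=
  calc v ⬝ᵥ A *ᵥ v ≤ √(v ⬝ᵥ v) * √(A *ᵥ v ⬝ᵥ A *ᵥ v) := dotProduct_le_sqrt_mul_sqrt _ _
    _ ≤ √(v ⬝ᵥ v) * (sigma2 A w * √(v ⬝ᵥ v)) := by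
      gcongr; exact sqrt_dotProduct_mulVec_le_sigma2_mul A hvw
    _ = sigma2 A w * (v ⬝ᵥ v) := by
      rw [mul_left_comm, Real.mul_self_sqrt (dotProduct_self_nonneg v)]

lemma one_sub_sigma2_mul_le_dotProduct_mulVec_sub (hAw : A *ᵥ w = w) (hwA : w ᵥ* A = w)
    (hww : w ⬝ᵥ w = 1) {u : Fin n → ℝ} (hu : u ⬝ᵥ u = u ⬝ᵥ w) :
    (1 - sigma2 A w) * ((u ⬝ᵥ w) * (1 - u ⬝ᵥ w)) ≤ u ⬝ᵥ A *ᵥ (w - u) := by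
  set a := u ⬝ᵥ w
  have hwu : w ⬝ᵥ u = a := dotProduct_comm w u
  have hvw : (u - a • w) ⬝ᵥ w = 0 := by
    rw [sub_dotProduct, smul_dotProduct, hww, smul_eq_mul, mul_one, sub_self]
  have hvv : (u - a • w) ⬝ᵥ (u - a • w) = a * (1 - a) := by
    simp only [sub_dotProduct, dotProduct_sub, smul_dotProduct, dotProduct_smul, smul_eq_mul,
      hu, hwu, hww]
    ring
  have hvAv : (u - a • w) ⬝ᵥ A *ᵥ (u - a • w) = u ⬝ᵥ A *ᵥ u - a ^ 2 := by
    simp only [mulVec_sub, mulVec_smul, sub_dotProduct, dotProduct_sub, smul_dotProduct,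
      dotProduct_smul, smul_eq_mul, hAw, dotProduct_mulVec w, hwA, hwu, hww]
    ring
  have hσ := dotProduct_mulVec_le_sigma2_mul A hvw
  rw [hvv, hvAv] at hσ
  rw [mulVec_sub, dotProduct_sub, hAw]
  linarith

end Sigma2

theorem stmt_4_general {n : ℕ} (A : Matrix (Fin n) (Fin n) ℝ)
    (hA : ∀ i j, 0 ≤ A i j)
    (w : Fin n → ℝ) (hw : ∀ i, 0 < w i)
    (hAw : A.mulVec w = w) (hwA : A.vecMul w = w)
    (hwnorm : ∑ i, w i ^ 2 = 1) :
    ∀ S : Finset (Fin n), S.Nonempty → (∑ i ∈ S, w i ^ 2) ≤ 1 / 2 →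
      (1 - sigma2 A w) / 2 ≤
        (∑ i ∈ S, ∑ j ∈ Sᶜ, w i * A i j * w j) / (∑ i ∈ S, w i ^ 2) := by
  intro S hS hhalf
  have ha : 0 < ∑ i ∈ S, w i ^ 2 := sum_pos (fun i _ => pow_pos (hw i) 2) hS
  have hcut_nonneg : 0 ≤ ∑ i ∈ S, ∑ j ∈ Sᶜ, w i * A i j * w j :=
    sum_nonneg fun i _ => sum_nonneg fun j _ =>
      mul_nonneg (mul_nonneg (hw i).le (hA i j)) (hw j).le
  set u := (S : Set (Fin n)).indicator w
  have huw : u ⬝ᵥ w = ∑ i ∈ S, w i ^ 2 := by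
    simp [u, dotProduct, Set.indicator_apply, sq]
  have huu : u ⬝ᵥ u = u ⬝ᵥ w :=
    sum_congr rfl fun i _ => by by_cases h : i ∈ S <;> simp [u, h]
  have hcut : u ⬝ᵥ A *ᵥ (w - u) = ∑ i ∈ S, ∑ j ∈ Sᶜ, w i * A i j * w j := by
    rw [← Set.indicator_compl, ← coe_compl, indicator_dotProduct_mulVec_indicator]
  have hww : w ⬝ᵥ w = 1 := by simpa only [dotProduct, sq] using hwnorm
  have key := one_sub_sigma2_mul_le_dotProduct_mulVec_sub A hAw hwA hww huu
  rw [huw, hcut] at key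
  rw [le_div_iff₀ ha]
  rcases le_total (sigma2 A w) 1 with hσ | hσ
  · linarith [mul_nonneg (mul_nonneg (sub_nonneg.2 hσ) ha.le) (sub_nonneg.2 hhalf)]
  · linarith [mul_nonneg (sub_nonneg.2 hσ) ha.le]

theorem stmt_4 {n : ℕ} (A : Matrix (Fin n) (Fin n) ℝ)
    (hA : ∀ i j, 0 ≤ A i j)
    (hirr : ∀ s t : Fin n, ∃ k : ℕ, 0 < k ∧ 0 < (A ^ k) s t)
    (w : Fin n → ℝ) (hw : ∀ i, 0 < w i)
    (hAw : A.mulVec w = w) (hwA : A.vecMul w = w)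
    (hwnorm : ∑ i, w i ^ 2 = 1) :
    ∀ S : Finset (Fin n), S.Nonempty → (∑ i ∈ S, w i ^ 2) ≤ 1 / 2 →
      (1 - sigma2 A w) / 2 ≤
        (∑ i ∈ S, ∑ j ∈ Sᶜ, w i * A i j * w j) / (∑ i ∈ S, w i ^ 2) :=
  stmt_4_general A hA w hw hAw hwA hwnorm
end

section
/- Let R be an irreducible nonnegative matrix with PF eigenvalue 1 and positive eigenvectors u, v with ⟨u,v⟩ = 1, and let E_R = exp(R − I). Then: (a) E_R is nonnegative and irreducible with PF eigenvalue 1 and the same left/right eigenvectors u, v; (b) for every t ≥ 0 and every cut S, φ_S(exp(t(R − I))) ≤ t · φ_S(R). -/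
open Matrix Finset

/-- The matrix exponential, `exp M = ∑_{p ≥ 0} M^p / p!`, defined entrywise. -/
noncomputable def matExp {n : ℕ} (M : Matrix (Fin n) (Fin n) ℝ) : Matrix (Fin n) (Fin n) ℝ :=
  Matrix.of fun i j => ∑' p : ℕ, ((Nat.factorial p : ℝ)⁻¹ * (M ^ p) i j)

/-- The edge expansion of the cut `S`. -/
noncomputable def ePhiS {n : ℕ} (u v : Fin n → ℝ) (M : Matrix (Fin n) (Fin n) ℝ)
    (S : Finset (Fin n)) : ℝ :=
  (∑ i ∈ S, ∑ j ∈ Sᶜ, u i * M i j * v j) / (∑ i ∈ S, u i * v i)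

/-!
For `t ≥ 0`, `exp (t • (R - 1)) = ∑ₚ e⁻ᵗ tᵖ / p! • Rᵖ` is an average of the powers of `R` with
Poisson weights. Each power is nonnegative and fixes `u` on the left and `v` on the right, so the
average does too, and irreducibility puts a positive term into every entry of `exp (R - 1)`.
An eigenvalue `μ` with eigenvector `w` satisfies `‖μ‖ |w| ≤ E |w|` entrywise; pairing with the
positive left fixed vector `u` gives `‖μ‖ ≤ 1`.
The `u`/`v`-weighted flow across a cut is subadditive on products of such matrices, since the mass
leaving `S` through `A * B` either leaves in the `A` step or in the `B` step; hence the flow of `Rᵖ`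
is at most `p` times that of `R`, and averaging against the Poisson weights, whose mean is `t`,
gives (b).
-/

open scoped Nat

noncomputable def poissonWeight (t : ℝ) (p : ℕ) : ℝ := Real.exp (-t) * t ^ p / p !

lemma poissonWeight_nonneg {t : ℝ} (ht : 0 ≤ t) (p : ℕ) : 0 ≤ poissonWeight t p := by
  unfold poissonWeight; positivity

lemma poissonWeight_pos {t : ℝ} (ht : 0 < t) (p : ℕ) : 0 < poissonWeight t p := by
  unfold poissonWeight; positivity

lemma hasSum_poissonWeight (t : ℝ) : HasSum (poissonWeight t) 1 := by
  have h := (NormedSpace.expSeries_div_hasSum_exp t).mul_left (Real.exp (-t))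
  rw [← Real.exp_eq_exp_ℝ, ← Real.exp_add, neg_add_cancel, Real.exp_zero] at h
  exact h.congr_fun fun p => mul_div_assoc _ _ _

lemma hasSum_natCast_mul_poissonWeight (t : ℝ) :
    HasSum (fun p : ℕ => p * poissonWeight t p) t := by
  have hshift : HasSum (fun p : ℕ => ((p + 1 : ℕ) : ℝ) * poissonWeight t (p + 1)) t := by
    have h := (hasSum_poissonWeight t).mul_left t
    rw [mul_one] at h
    refine h.congr_fun fun p => ?_
    simp only [poissonWeight, Nat.factorial_succ, pow_succ, Nat.cast_mul]
    field_simp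
  exact (hasSum_nat_add_iff' 1).mp (by simpa using hshift)

section Exponential

attribute [local instance] Matrix.linftyOpNormedRing Matrix.linftyOpNormedAlgebra

variable {ι : Type*} [Fintype ι] [DecidableEq ι]

lemma matExp_eq_exp {n : ℕ} (M : Matrix (Fin n) (Fin n) ℝ) : matExp M = NormedSpace.exp M := by
  ext i j
  have h := Pi.hasSum.mp (Pi.hasSum.mp (NormedSpace.exp_series_hasSum_exp' (𝕂 := ℝ) M) i) j
  exact h.tsum_eq

lemma Matrix.exp_smul_sub_one (A : Matrix ι ι ℝ) (t : ℝ) :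
    NormedSpace.exp (t • (A - 1)) = Real.exp (-t) • NormedSpace.exp (t • A) := by
  have hcomm : Commute (t • A) ((-t) • (1 : Matrix ι ι ℝ)) := (Commute.one_right _).smul_right _
  have hscalar : NormedSpace.exp ((-t) • (1 : Matrix ι ι ℝ)) = Real.exp (-t) • 1 := by
    rw [smul_one_eq_diagonal, exp_diagonal, smul_one_eq_diagonal, Pi.exp_def, Real.exp_eq_exp_ℝ]
  rw [smul_sub, sub_eq_add_neg, ← neg_smul, exp_add_of_commute _ _ hcomm, hscalar, mul_smul_comm,
    mul_one]

lemma Matrix.hasSum_poissonWeight_smul_pow (A : Matrix ι ι ℝ) (t : ℝ) :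
    HasSum (fun p => poissonWeight t p • A ^ p) (NormedSpace.exp (t • (A - 1))) := by
  rw [Matrix.exp_smul_sub_one]
  have h := (NormedSpace.exp_series_hasSum_exp' (𝕂 := ℝ) (t • A)).const_smul (Real.exp (-t))
  refine h.congr_fun fun p => ?_
  rw [smul_pow, smul_smul, smul_smul, poissonWeight]
  ring_nf

lemma Matrix.hasSum_poissonWeight_smul_pow_matExp {n : ℕ} (A : Matrix (Fin n) (Fin n) ℝ) (t : ℝ) :
    HasSum (fun p => poissonWeight t p • A ^ p) (matExp (t • (A - 1))) :=
  matExp_eq_exp _ ▸ A.hasSum_poissonWeight_smul_pow t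

end Exponential

section SeriesOfPowers

variable {ι : Type*} [Fintype ι] [DecidableEq ι] {A E : Matrix ι ι ℝ} {w : ℕ → ℝ}

lemma Matrix.pow_mulVec_eq_self {v : ι → ℝ} (hv : A *ᵥ v = v) (p : ℕ) : A ^ p *ᵥ v = v := by
  induction p with
  | zero => simp
  | succ p ih => rw [pow_succ, ← mulVec_mulVec, hv, ih]

lemma Matrix.vecMul_pow_eq_self {u : ι → ℝ} (hu : u ᵥ* A = u) (p : ℕ) : u ᵥ* A ^ p = u := by
  induction p with
  | zero => simp
  | succ p ih => rw [pow_succ, ← vecMul_vecMul, ih, hu]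

lemma mulVec_eq_of_hasSum_smul_pow (hE : HasSum (fun p => w p • A ^ p) E) (hw : HasSum w 1)
    {v : ι → ℝ} (hv : A *ᵥ v = v) : E *ᵥ v = v := by
  have hEv := hE.map (mulVec.addMonoidHomLeft v) (continuous_id.matrix_mulVec continuous_const)
  refine hEv.unique ?_
  simpa [Function.comp_def, mulVec.addMonoidHomLeft, smul_mulVec, pow_mulVec_eq_self hv] using
    hw.smul_const v

lemma vecMul_eq_of_hasSum_smul_pow (hE : HasSum (fun p => w p • A ^ p) E) (hw : HasSum w 1)
    {u : ι → ℝ} (hu : u ᵥ* A = u) : u ᵥ* E = u := by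
  rw [← mulVec_transpose] at hu ⊢
  refine mulVec_eq_of_hasSum_smul_pow ?_ hw hu
  simpa only [transpose_smul, transpose_pow] using hE.matrix_transpose

lemma hasSum_smul_pow_apply (hE : HasSum (fun p => w p • A ^ p) E) (i j : ι) :
    HasSum (fun p => w p * (A ^ p) i j) (E i j) :=
  Pi.hasSum.mp (Pi.hasSum.mp hE i) j

lemma nonneg_of_hasSum_smul_pow (hE : HasSum (fun p => w p • A ^ p) E) (hw : ∀ p, 0 ≤ w p)
    (hA : ∀ i j, 0 ≤ A i j) (i j : ι) : 0 ≤ E i j :=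
  (hasSum_smul_pow_apply hE i j).nonneg fun p => mul_nonneg (hw p) (pow_apply_nonneg hA p i j)

lemma pos_of_hasSum_smul_pow (hE : HasSum (fun p => w p • A ^ p) E) (hw : ∀ p, 0 < w p)
    (hA : ∀ i j, 0 ≤ A i j) {i j : ι} {k : ℕ} (hk : 0 < (A ^ k) i j) : 0 < E i j :=
  hasSum_lt (fun p => mul_nonneg (hw p).le (pow_apply_nonneg hA p i j)) (mul_pos (hw k) hk)
    hasSum_zero (hasSum_smul_pow_apply hE i j)

end SeriesOfPowers

section Spectrum

variable {ι : Type*} [Fintype ι] [DecidableEq ι]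

lemma Matrix.exists_mulVec_eq_smul_of_isRoot_charpoly {K : Type*} [Field K] {A : Matrix ι ι K}
    {μ : K} (hμ : A.charpoly.IsRoot μ) : ∃ w ≠ 0, A *ᵥ w = μ • w := by
  rw [← charpoly_toLin', ← Module.End.hasEigenvalue_iff_isRoot_charpoly] at hμ
  obtain ⟨w, hw⟩ := hμ.exists_hasEigenvector
  exact ⟨w, hw.2, by simpa using hw.apply_eq_smul⟩

lemma Matrix.norm_le_one_of_isRoot_charpoly {E : Matrix ι ι ℝ} (hE : ∀ i j, 0 ≤ E i j)
    {u : ι → ℝ} (hu : ∀ i, 0 < u i) (huE : u ᵥ* E = u) {μ : ℂ}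
    (hμ : (E.map (algebraMap ℝ ℂ)).charpoly.IsRoot μ) : ‖μ‖ ≤ 1 := by
  obtain ⟨w, hw0, hw⟩ := exists_mulVec_eq_smul_of_isRoot_charpoly hμ
  set a : ι → ℝ := fun i => ‖w i‖
  have hle : ‖μ‖ • a ≤ E *ᵥ a := fun i => by
    calc ‖μ‖ * ‖w i‖ = ‖(E.map (algebraMap ℝ ℂ) *ᵥ w) i‖ := by rw [hw]; simp
      _ ≤ ∑ j, ‖(E i j : ℂ) * w j‖ := by
        simpa [mulVec, dotProduct] using norm_sum_le univ fun j => (E i j : ℂ) * w j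
      _ = (E *ᵥ a) i := by simp [mulVec, dotProduct, a, abs_of_nonneg (hE i _)]
  have hpos : 0 < u ⬝ᵥ a := by
    obtain ⟨i, hi⟩ := Function.ne_iff.mp hw0
    exact Finset.sum_pos' (fun j _ => mul_nonneg (hu j).le (norm_nonneg _))
      ⟨i, mem_univ _, mul_pos (hu i) (norm_pos_iff.mpr hi)⟩
  have := dotProduct_le_dotProduct_of_nonneg_left hle fun i => (hu i).le
  rw [dotProduct_mulVec, huE, dotProduct_smul, smul_eq_mul] at this
  exact (mul_le_iff_le_one_left hpos).mp this

end Spectrum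

lemma dotProduct_le_indicator_dotProduct_add {ι : Type*} [Fintype ι] {a b x y : ι → ℝ}
    (ha : 0 ≤ a) (hb : 0 ≤ b) (hax : a ≤ x) (hby : b ≤ y) (s : Set ι) :
    a ⬝ᵥ b ≤ s.indicator x ⬝ᵥ b + a ⬝ᵥ sᶜ.indicator y := by
  simp only [dotProduct, ← sum_add_distrib]
  refine sum_le_sum fun k _ => ?_
  by_cases hk : k ∈ s
  · simpa [hk] using mul_le_mul_of_nonneg_right (hax k) (hb k)
  · simpa [hk] using mul_le_mul_of_nonneg_left (hby k) (ha k)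

section CutFlow

variable {ι : Type*} [Fintype ι] [DecidableEq ι]

def cutFlow (u v : ι → ℝ) (M : Matrix ι ι ℝ) (S : Finset ι) : ℝ :=
  ∑ i ∈ S, ∑ j ∈ Sᶜ, u i * M i j * v j

variable (u v : ι → ℝ) (S : Finset ι)

lemma cutFlow_eq_dotProduct (M : Matrix ι ι ℝ) :
    cutFlow u v M S = (↑S : Set ι).indicator u ⬝ᵥ (M *ᵥ (↑S : Set ι)ᶜ.indicator v) := by
  simp only [cutFlow, dotProduct, mulVec, Set.indicator_apply, ← coe_compl, mem_coe, ite_mul,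
    mul_ite, zero_mul, mul_zero, sum_ite_mem, univ_inter]
  simp only [mul_sum, mul_assoc]

lemma cutFlow_one : cutFlow u v 1 S = 0 := by
  rw [cutFlow_eq_dotProduct, one_mulVec]
  refine sum_eq_zero fun k _ => ?_
  by_cases hk : k ∈ S <;> simp [hk]

lemma cutFlow_smul (c : ℝ) (M : Matrix ι ι ℝ) : cutFlow u v (c • M) S = c * cutFlow u v M S := by
  simp only [cutFlow, Matrix.smul_apply, smul_eq_mul, mul_sum]
  exact sum_congr rfl fun i _ => sum_congr rfl fun j _ => by ring

lemma HasSum.cutFlow {f : ℕ → Matrix ι ι ℝ} {M : Matrix ι ι ℝ} (h : HasSum f M) :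
    HasSum (fun p => cutFlow u v (f p) S) (cutFlow u v M S) :=
  hasSum_sum fun i _ => hasSum_sum fun j _ =>
    ((Pi.hasSum.mp (Pi.hasSum.mp h i) j).mul_left (u i)).mul_right (v j)

variable {u v}

lemma cutFlow_mul_le (hu : ∀ i, 0 ≤ u i) (hv : ∀ i, 0 ≤ v i) {A B : Matrix ι ι ℝ}
    (hA : ∀ i j, 0 ≤ A i j) (hB : ∀ i j, 0 ≤ B i j) (huA : u ᵥ* A = u) (hBv : B *ᵥ v = v) :
    cutFlow u v (A * B) S ≤ cutFlow u v A S + cutFlow u v B S := by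
  set x := (↑S : Set ι).indicator u
  set y := (↑S : Set ι)ᶜ.indicator v
  have hx : 0 ≤ x := Set.indicator_nonneg fun i _ => hu i
  have hy : 0 ≤ y := Set.indicator_nonneg fun i _ => hv i
  have hxA : x ᵥ* A ≤ u := huA ▸ fun k =>
    dotProduct_le_dotProduct_of_nonneg_right (Set.indicator_le_self' fun i _ => hu i) (hA · k)
  have hBy : B *ᵥ y ≤ v := hBv ▸ fun k =>
    dotProduct_le_dotProduct_of_nonneg_left (Set.indicator_le_self' fun i _ => hv i) (hB k)
  calc cutFlow u v (A * B) S = (x ᵥ* A) ⬝ᵥ (B *ᵥ y) := by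
        rw [cutFlow_eq_dotProduct, ← mulVec_mulVec, dotProduct_mulVec]
    _ ≤ x ⬝ᵥ (B *ᵥ y) + (x ᵥ* A) ⬝ᵥ y :=
        dotProduct_le_indicator_dotProduct_add (fun k => dotProduct_nonneg_of_nonneg hx (hA · k))
          (fun k => dotProduct_nonneg_of_nonneg (hB k) hy) hxA hBy S
    _ = cutFlow u v A S + cutFlow u v B S := by
        rw [cutFlow_eq_dotProduct, cutFlow_eq_dotProduct, dotProduct_mulVec x A y, add_comm]

lemma cutFlow_pow_le (hu : ∀ i, 0 ≤ u i) (hv : ∀ i, 0 ≤ v i) {A : Matrix ι ι ℝ}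
    (hA : ∀ i j, 0 ≤ A i j) (huA : u ᵥ* A = u) (hAv : A *ᵥ v = v) (p : ℕ) :
    cutFlow u v (A ^ p) S ≤ p * cutFlow u v A S := by
  induction p with
  | zero => simp [cutFlow_one]
  | succ p ih =>
    rw [pow_succ]
    have := cutFlow_mul_le S hu hv (pow_apply_nonneg hA p) hA (vecMul_pow_eq_self huA p) hAv
    push_cast
    linarith

lemma cutFlow_le_of_hasSum_poissonWeight_smul_pow (hu : ∀ i, 0 ≤ u i) (hv : ∀ i, 0 ≤ v i)
    {A : Matrix ι ι ℝ} (hA : ∀ i j, 0 ≤ A i j) (huA : u ᵥ* A = u) (hAv : A *ᵥ v = v) {t : ℝ}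
    (ht : 0 ≤ t) {E : Matrix ι ι ℝ} (hE : HasSum (fun p => poissonWeight t p • A ^ p) E) :
    cutFlow u v E S ≤ t * cutFlow u v A S := by
  refine hasSum_le (fun p => ?_) (hE.cutFlow u v S)
    ((hasSum_natCast_mul_poissonWeight t).mul_right (cutFlow u v A S))
  rw [cutFlow_smul]
  calc poissonWeight t p * cutFlow u v (A ^ p) S
      ≤ poissonWeight t p * (p * cutFlow u v A S) :=
        mul_le_mul_of_nonneg_left (cutFlow_pow_le S hu hv hA huA hAv p) (poissonWeight_nonneg ht p)
    _ = p * poissonWeight t p * cutFlow u v A S := by ring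

end CutFlow

theorem stmt_11_general {n : ℕ} (R : Matrix (Fin n) (Fin n) ℝ)
    (hR : ∀ i j, 0 ≤ R i j)
    (hirr : ∀ s t : Fin n, ∃ k : ℕ, 0 < k ∧ 0 < (R ^ k) s t)
    (u v : Fin n → ℝ) (hu : ∀ i, 0 < u i) (hv : ∀ i, 0 < v i)
    (huR : R.vecMul u = u) (hRv : R.mulVec v = v) :
    -- (a)
    (∀ i j, 0 ≤ matExp (R - 1) i j) ∧
    (∀ s t : Fin n, ∃ k : ℕ, 0 < k ∧ 0 < ((matExp (R - 1)) ^ k) s t) ∧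
    (matExp (R - 1)).mulVec v = v ∧
    (matExp (R - 1)).vecMul u = u ∧
    (∀ μ : ℂ, (((matExp (R - 1)).map (algebraMap ℝ ℂ)).charpoly).IsRoot μ →
      ‖μ‖ ≤ 1) ∧
    -- (b)
    (∀ t : ℝ, 0 ≤ t → ∀ S : Finset (Fin n),
      ePhiS u v (matExp (t • (R - 1))) S ≤ t * ePhiS u v R S) := by
  have hE : HasSum (fun p => poissonWeight 1 p • R ^ p) (matExp (R - 1)) := by
    simpa only [one_smul] using R.hasSum_poissonWeight_smul_pow_matExp 1
  have hE_nonneg := nonneg_of_hasSum_smul_pow hE (poissonWeight_nonneg zero_le_one) hR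
  have huE := vecMul_eq_of_hasSum_smul_pow hE (hasSum_poissonWeight 1) huR
  refine ⟨hE_nonneg, fun s t => ?_, mulVec_eq_of_hasSum_smul_pow hE (hasSum_poissonWeight 1) hRv,
    huE, fun μ hμ => norm_le_one_of_isRoot_charpoly hE_nonneg hu huE hμ, fun t ht S => ?_⟩
  · obtain ⟨k, -, hk⟩ := hirr s t
    exact ⟨1, one_pos, by simpa using pos_of_hasSum_smul_pow hE (poissonWeight_pos one_pos) hR hk⟩
  · rw [ePhiS, ePhiS, ← mul_div_assoc]
    exact div_le_div_of_nonneg_right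
      (cutFlow_le_of_hasSum_poissonWeight_smul_pow S (fun i => (hu i).le) (fun i => (hv i).le) hR
        huR hRv ht (R.hasSum_poissonWeight_smul_pow_matExp t))
      (sum_nonneg fun i _ => mul_nonneg (hu i).le (hv i).le)

theorem stmt_11 {n : ℕ} (R : Matrix (Fin n) (Fin n) ℝ)
    (hR : ∀ i j, 0 ≤ R i j)
    (hirr : ∀ s t : Fin n, ∃ k : ℕ, 0 < k ∧ 0 < (R ^ k) s t)
    (u v : Fin n → ℝ) (hu : ∀ i, 0 < u i) (hv : ∀ i, 0 < v i)
    (huR : R.vecMul u = u) (hRv : R.mulVec v = v)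
    (huv : ∑ i, u i * v i = 1) :
    -- (a)
    (∀ i j, 0 ≤ matExp (R - 1) i j) ∧
    (∀ s t : Fin n, ∃ k : ℕ, 0 < k ∧ 0 < ((matExp (R - 1)) ^ k) s t) ∧
    (matExp (R - 1)).mulVec v = v ∧
    (matExp (R - 1)).vecMul u = u ∧
    (∀ μ : ℂ, (((matExp (R - 1)).map (algebraMap ℝ ℂ)).charpoly).IsRoot μ →
      ‖μ‖ ≤ 1) ∧
    -- (b)
    (∀ t : ℝ, 0 ≤ t → ∀ S : Finset (Fin n),
      ePhiS u v (matExp (t • (R - 1))) S ≤ t * ePhiS u v R S) :=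
  stmt_11_general R hR hirr u v hu hv huR hRv
end
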